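/- arXiv:1708.09724 — 2 statements merged into one kernel-verified Lean document; each statement's English description precedes it below -/
import Mathlib

section
/- With K spanned by {V_a + ξ_a} isotropic, T_{ab} = g(V_a,V_b) + g(ξ_a,ξ_b) invertible with inverse T^{ab}, and [π] : K^G → V/π(K) the projection (π the projection to V followed by the quotient), the map sending ξ ∈ ann(π(K)) ⊂ V* to ξ − T^{ab} g(ξ, ξ_a)(V_b + ξ_b) takes values in K^G, and composed with the natural pairing it is the adjoint of [π]; moreover its image equals ker([π]). -/
/-- Lemma 3.3, linear model: the map
`ξ ↦ ξ − T^{ab} g(ξ, ξ_a)(V_b + ξ_b)` defined on the annihilator of `π(K)` takes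
values in `K^G`, is the adjoint of the projection `[π]` with respect to the natural
pairing (`⟨Φξ, Y+η⟩ = ξ(Y)`), and its image is exactly `ker([π])`, i.e. the set of
elements of `K^G` whose vector part lies in `span{V_a}`. -/
theorem pi_star_adjoint_and_kernel
    (V : Type*) [AddCommGroup V] [Module ℝ V] [FiniteDimensional ℝ V]
    (g : V ≃ₗ[ℝ] Module.Dual ℝ V)
    (hsym : ∀ x y : V, g x y = g y x)
    (hpos : ∀ x : V, x ≠ 0 → 0 < g x x)
    (n : ℕ) (Vv : Fin n → V) (ξv : Fin n → Module.Dual ℝ V)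
    (hiso : ∀ a b, ξv a (Vv b) + ξv b (Vv a) = 0)
    (hindepK : LinearIndependent ℝ (fun a => ((Vv a, ξv a) : V × Module.Dual ℝ V)))
    (P : V × Module.Dual ℝ V → V × Module.Dual ℝ V → ℝ)
    (hP : ∀ u v, P u v = u.2 v.1 + v.2 u.1)
    (G : V × Module.Dual ℝ V → V × Module.Dual ℝ V)
    (hG : ∀ u, G u = (g.symm u.2, g u.1))
    (K : Submodule ℝ (V × Module.Dual ℝ V))
    (hK : K = Submodule.span ℝ (Set.range fun a => ((Vv a, ξv a) : V × Module.Dual ℝ V)))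
    (Kperp : Set (V × Module.Dual ℝ V))
    (hKperp : Kperp = {u | ∀ k ∈ K, P u k = 0})
    (KG : Set (V × Module.Dual ℝ V))
    (hKG : KG = (G '' Kperp) ∩ Kperp)
    (T Tinv : Matrix (Fin n) (Fin n) ℝ)
    (hT : ∀ a b, T a b = g (Vv a) (Vv b) + (ξv a) (g.symm (ξv b)))
    (hTinv : Tinv * T = 1)
    (ann : Set (Module.Dual ℝ V))
    (hann : ann = {ξ | ∀ a, ξ (Vv a) = 0})
    (Φ : Module.Dual ℝ V → V × Module.Dual ℝ V)
    (hΦ : ∀ ξ, Φ ξ =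
      (-(∑ a, ∑ b, (Tinv a b * ξ (g.symm (ξv a))) • Vv b),
        ξ - ∑ a, ∑ b, (Tinv a b * ξ (g.symm (ξv a))) • ξv b)) :
    (∀ ξ ∈ ann, Φ ξ ∈ KG) ∧
    (∀ ξ ∈ ann, ∀ u ∈ KG, P (Φ ξ) u = ξ u.1) ∧
    (Φ '' ann = {u | u ∈ KG ∧ u.1 ∈ Submodule.span ℝ (Set.range Vv)}) := by
  classical
  have hgsymm : ∀ α β : Module.Dual ℝ V, α (g.symm β) = β (g.symm α) := by
    intro α β
    have h := hsym (g.symm α) (g.symm β)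
    simpa using h
  have hTsymm : ∀ a b, T a b = T b a := by
    intro a b
    rw [hT, hT, hsym (Vv a) (Vv b), hgsymm (ξv a) (ξv b)]
  have hTTinv : T * Tinv = 1 := mul_eq_one_comm.mp hTinv
  have hTt : T.transpose = T := by
    ext a b; exact hTsymm b a
  have hTit : Tinv.transpose = Tinv := by
    have h1 : Tinv.transpose * T = 1 := by
      calc Tinv.transpose * T = Tinv.transpose * T.transpose := by rw [hTt]
        _ = (T * Tinv).transpose := (Matrix.transpose_mul T Tinv).symm
        _ = 1 := by rw [hTTinv, Matrix.transpose_one]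
    calc Tinv.transpose = Tinv.transpose * (T * Tinv) := by rw [hTTinv, Matrix.mul_one]
      _ = (Tinv.transpose * T) * Tinv := by rw [Matrix.mul_assoc]
      _ = Tinv := by rw [h1, Matrix.one_mul]
  have hTinvsymm : ∀ a b, Tinv a b = Tinv b a := by
    intro a b
    calc Tinv a b = Tinv.transpose b a := (Matrix.transpose_apply Tinv b a).symm
      _ = Tinv b a := by rw [hTit]
  -- membership in Kperp via generators
  have hmemKperp : ∀ u, u ∈ Kperp ↔ ∀ a, u.2 (Vv a) + ξv a u.1 = 0 := by
    intro u
    rw [hKperp, Set.mem_setOf_eq]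
    constructor
    · intro h a
      have := h (Vv a, ξv a) (by rw [hK]; exact Submodule.subset_span ⟨a, rfl⟩)
      simpa [hP] using this
    · intro h k hk
      rw [hK] at hk
      induction hk using Submodule.span_induction with
      | mem x hx => obtain ⟨a, rfl⟩ := hx; simpa [hP] using h a
      | zero => simp [hP]
      | add x y hx hy ihx ihy => simp [hP] at ihx ihy ⊢; linarith
      | smul c x hx ih =>
          simp [hP] at ih ⊢
          linear_combination c * ih
  have hGG : ∀ u, G (G u) = u := by intro u; simp [hG]
  have hmemKG : ∀ u : V × Module.Dual ℝ V, u ∈ KG ↔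
      ((∀ a, g u.1 (Vv a) + ξv a (g.symm u.2) = 0) ∧ (∀ a, u.2 (Vv a) + ξv a u.1 = 0)) := by
    intro u
    rw [hKG, Set.mem_inter_iff]
    have himg : u ∈ G '' Kperp ↔ G u ∈ Kperp := by
      constructor
      · rintro ⟨w, hw, rfl⟩; rwa [hGG]
      · intro h; exact ⟨G u, h, hGG u⟩
    rw [himg, hmemKperp, hmemKperp, hG]
  -- evaluation lemmas for Φ
  have hΦfst : ∀ ξ (η : Module.Dual ℝ V),
      η (Φ ξ).1 = -∑ a, ∑ b, Tinv a b * ξ (g.symm (ξv a)) * η (Vv b) := by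
    intro ξ η
    rw [hΦ]
    simp [smul_eq_mul, mul_assoc]
  have hΦsnd : ∀ ξ (x : V),
      (Φ ξ).2 x = ξ x - ∑ a, ∑ b, Tinv a b * ξ (g.symm (ξv a)) * ξv b x := by
    intro ξ x
    rw [hΦ]
    simp [smul_eq_mul, mul_assoc]
  have hΦfst' : ∀ ξ (x : V),
      g (Φ ξ).1 x = -∑ a, ∑ b, Tinv a b * ξ (g.symm (ξv a)) * g (Vv b) x := by
    intro ξ x
    rw [hΦ]
    simp [smul_eq_mul, mul_assoc]
  have hΦsnd' : ∀ ξ (η : Module.Dual ℝ V),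
      η (g.symm (Φ ξ).2)
        = η (g.symm ξ) - ∑ a, ∑ b, Tinv a b * ξ (g.symm (ξv a)) * η (g.symm (ξv b)) := by
    intro ξ η
    rw [hΦ]
    simp [smul_eq_mul, mul_assoc]
  -- the delta lemma
  have hdelta : ∀ (ξ : Module.Dual ℝ V) (c : Fin n),
      ∑ a, ∑ b, Tinv a b * ξ (g.symm (ξv a)) * T b c = ξ (g.symm (ξv c)) := by
    intro ξ c
    have h1 : ∀ a, ∑ b, Tinv a b * ξ (g.symm (ξv a)) * T b c
        = ξ (g.symm (ξv a)) * (Tinv * T) a c := by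
      intro a
      rw [Matrix.mul_apply, Finset.mul_sum]
      exact Finset.sum_congr rfl fun b _ => by ring
    rw [Finset.sum_congr rfl fun a _ => h1 a]
    simp [hTinv, Matrix.one_apply]
  -- Part 1
  have part1 : ∀ ξ ∈ ann, Φ ξ ∈ KG := by
    intro ξ hξ
    rw [hann, Set.mem_setOf_eq] at hξ
    rw [hmemKG]
    constructor
    · intro c
      have hsum : ∑ a, ∑ b, Tinv a b * ξ (g.symm (ξv a)) * g (Vv b) (Vv c)
                + ∑ a, ∑ b, Tinv a b * ξ (g.symm (ξv a)) * ξv c (g.symm (ξv b))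
                = ξ (g.symm (ξv c)) := by
        rw [← Finset.sum_add_distrib, ← hdelta ξ c]
        apply Finset.sum_congr rfl; intro a _
        rw [← Finset.sum_add_distrib]
        apply Finset.sum_congr rfl; intro b _
        rw [hTsymm b c, hT c b, hsym (Vv c) (Vv b)]
        ring
      rw [hΦfst' ξ (Vv c), hΦsnd' ξ (ξv c), hgsymm (ξv c) ξ]
      linarith [hsum]
    · intro c
      have hsum : ∑ a, ∑ b, Tinv a b * ξ (g.symm (ξv a)) * ξv b (Vv c)
                + ∑ a, ∑ b, Tinv a b * ξ (g.symm (ξv a)) * ξv c (Vv b) = 0 := by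
        rw [← Finset.sum_add_distrib]
        apply Finset.sum_eq_zero; intro a _
        rw [← Finset.sum_add_distrib]
        apply Finset.sum_eq_zero; intro b _
        linear_combination (Tinv a b * ξ (g.symm (ξv a))) * hiso b c
      rw [hΦsnd ξ (Vv c), hΦfst ξ (ξv c), hξ c]
      linarith [hsum]
  -- Part 2
  have part2 : ∀ ξ ∈ ann, ∀ u ∈ KG, P (Φ ξ) u = ξ u.1 := by
    intro ξ hξ u hu
    obtain ⟨h1, h2⟩ := (hmemKG u).mp hu
    rw [hP, hΦsnd ξ u.1, hΦfst ξ u.2]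
    have hsum : ∑ a, ∑ b, Tinv a b * ξ (g.symm (ξv a)) * ξv b u.1
              + ∑ a, ∑ b, Tinv a b * ξ (g.symm (ξv a)) * u.2 (Vv b) = 0 := by
      rw [← Finset.sum_add_distrib]
      apply Finset.sum_eq_zero; intro a _
      rw [← Finset.sum_add_distrib]
      apply Finset.sum_eq_zero; intro b _
      linear_combination (Tinv a b * ξ (g.symm (ξv a))) * h2 b
    linarith [hsum]
  refine ⟨part1, part2, ?_⟩
  apply Set.Subset.antisymm
  · rintro _ ⟨ξ, hξ, rfl⟩
    refine ⟨part1 ξ hξ, ?_⟩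
    have h1 : (Φ ξ).1 = -(∑ a, ∑ b, (Tinv a b * ξ (g.symm (ξv a))) • Vv b) := by rw [hΦ]
    rw [h1]
    exact neg_mem (Submodule.sum_mem _ fun a _ => Submodule.sum_mem _ fun b _ =>
      Submodule.smul_mem _ _ (Submodule.subset_span ⟨b, rfl⟩))
  · rintro u ⟨huKG, huspan⟩
    obtain ⟨y, hy⟩ := (Submodule.mem_span_range_iff_exists_fun ℝ).mp huspan
    obtain ⟨h1, h2⟩ := (hmemKG u).mp huKG
    set ξ : Module.Dual ℝ V := u.2 - ∑ b, y b • ξv b with hxidef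
    have hξeval : ∀ x : V, ξ x = u.2 x - ∑ b, y b * ξv b x := by
      intro x
      simp [hxidef, smul_eq_mul]
    have hu1eval : ∀ η : Module.Dual ℝ V, η u.1 = ∑ b, y b * η (Vv b) := by
      intro η
      rw [← hy]
      simp [smul_eq_mul]
    have hgu1eval : ∀ x : V, g u.1 x = ∑ b, y b * g (Vv b) x := by
      intro x
      rw [← hy]
      simp [smul_eq_mul]
    have hξann : ∀ a, ξ (Vv a) = 0 := by
      intro a
      have h2a := h2 a
      rw [hu1eval (ξv a)] at h2a
      rw [hξeval (Vv a)]
      have hsum : ∑ b, (y b * ξv a (Vv b) + y b * ξv b (Vv a)) = 0 :=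
        Finset.sum_eq_zero fun b _ => by linear_combination y b * hiso a b
      rw [Finset.sum_add_distrib] at hsum
      linarith
    have hξdual : ∀ a, ξ (g.symm (ξv a)) = -∑ c, y c * T a c := by
      intro a
      have h1a := h1 a
      rw [hgu1eval (Vv a), hgsymm (ξv a) u.2] at h1a
      rw [hξeval (g.symm (ξv a))]
      have hsum : ∑ c, (y c * g (Vv c) (Vv a) + y c * ξv c (g.symm (ξv a)))
          = ∑ c, y c * T a c := by
        apply Finset.sum_congr rfl; intro c _
        rw [hT a c, hsym (Vv a) (Vv c), hgsymm (ξv a) (ξv c)]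
        ring
      rw [Finset.sum_add_distrib] at hsum
      linarith
    have hcb : ∀ b, ∑ a, Tinv a b * ξ (g.symm (ξv a)) = -y b := by
      intro b
      have step1 : ∀ a, Tinv a b * ξ (g.symm (ξv a))
          = ∑ c, -(y c * (Tinv b a * T a c)) := by
        intro a
        rw [hξdual a, hTinvsymm a b, mul_neg, Finset.mul_sum, ← Finset.sum_neg_distrib]
        apply Finset.sum_congr rfl; intro c _; ring
      rw [Finset.sum_congr rfl fun a _ => step1 a, Finset.sum_comm]
      have step2 : ∀ c, ∑ a, -(y c * (Tinv b a * T a c))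
          = -(y c * (1 : Matrix (Fin n) (Fin n) ℝ) b c) := by
        intro c
        rw [Finset.sum_neg_distrib, ← Finset.mul_sum, ← Matrix.mul_apply, hTinv]
      rw [Finset.sum_congr rfl fun c _ => step2 c]
      simp [Matrix.one_apply]
    refine ⟨ξ, ?_, ?_⟩
    · rw [hann]; exact hξann
    · rw [hΦ]
      have hfst : ∑ a, ∑ b, (Tinv a b * ξ (g.symm (ξv a))) • Vv b = -u.1 := by
        rw [Finset.sum_comm, ← hy]
        rw [← Finset.sum_neg_distrib]
        apply Finset.sum_congr rfl; intro b _
        rw [← Finset.sum_smul, hcb b, neg_smul]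
      have hsnd : ∑ a, ∑ b, (Tinv a b * ξ (g.symm (ξv a))) • ξv b
          = -∑ b, y b • ξv b := by
        rw [Finset.sum_comm, ← Finset.sum_neg_distrib]
        apply Finset.sum_congr rfl; intro b _
        rw [← Finset.sum_smul, hcb b, neg_smul]
      rw [hfst, hsnd, neg_neg, hxidef, sub_neg_eq_add, sub_add_cancel]
end

section
/- Let V be a finite-dimensional real inner product space with metric g, and V_a, ξ_a with ξ_a(V_b)+ξ_b(V_a)=0, V_a^± = V_a ± g⁻¹ξ_a linearly independent. Let τ₊, τ₋ be the orthogonal complements of span{V_a^+}, span{V_a^−} respectively. Given X⁺ ∈ τ₊, the unique vector X⁻ ∈ τ₋ with X⁺ − X⁻ ∈ span{V_a} is X⁻ = X⁺ + 2K^{ab} ξ_b(X⁺) V_a, where K_{ab} = g(V_a, V_b) − ξ_a(V_b) is assumed invertible with inverse K^{ab}. -/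
/-- Given `X⁺ ∈ τ₊`, the unique `X⁻ ∈ τ₋` with `X⁺ − X⁻ ∈ span{V_a}`
is `X⁻ = X⁺ + 2 K^{ab} ξ_b(X⁺) V_a`, where `K_{ab} = g(V_a,V_b) − ξ_a(V_b)` with
inverse `K^{ab}`. -/
theorem sigma_map_formula
    (V : Type*) [AddCommGroup V] [Module ℝ V] [FiniteDimensional ℝ V]
    (g : V ≃ₗ[ℝ] Module.Dual ℝ V)
    (hsym : ∀ x y : V, g x y = g y x)
    (hpos : ∀ x : V, x ≠ 0 → 0 < g x x)
    (n : ℕ) (Vv : Fin n → V) (ξv : Fin n → Module.Dual ℝ V)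
    (hiso : ∀ a b, ξv a (Vv b) + ξv b (Vv a) = 0)
    (hindepP : LinearIndependent ℝ (fun a => Vv a + g.symm (ξv a)))
    (hindepM : LinearIndependent ℝ (fun a => Vv a - g.symm (ξv a)))
    (τp τm : Submodule ℝ V)
    (hτp : ∀ Y : V, Y ∈ τp ↔ ∀ a, g Y (Vv a + g.symm (ξv a)) = 0)
    (hτm : ∀ Y : V, Y ∈ τm ↔ ∀ a, g Y (Vv a - g.symm (ξv a)) = 0)
    (K Kinv : Matrix (Fin n) (Fin n) ℝ)
    (hK : ∀ a b, K a b = g (Vv a) (Vv b) - ξv a (Vv b))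
    (hKinv : Kinv * K = 1)
    (Xp : V) (hXp : Xp ∈ τp) :
    ∃! Xm : V, Xm ∈ τm ∧ Xp - Xm ∈ Submodule.span ℝ (Set.range Vv) ∧
      Xm = Xp + (2 : ℝ) • ∑ a, ∑ b, (Kinv a b * ξv b Xp) • Vv a := by
  have hgs : ∀ (x : V) (f : Module.Dual ℝ V), g x (g.symm f) = f x := by
    intro x f; rw [hsym]; simp
  have hXpV : ∀ a, g Xp (Vv a) = - ξv a Xp := by
    intro a
    have h := (hτp Xp).mp hXp a
    rw [map_add, hgs] at h
    linarith
  have hVK : ∀ a b, g (Vv b) (Vv a - g.symm (ξv a)) = K a b := by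
    intro a b
    rw [map_sub, hgs, hK, hsym]
  have hKK : K * Kinv = 1 := mul_eq_one_comm.mp hKinv
  refine ⟨Xp + (2 : ℝ) • ∑ a, ∑ b, (Kinv a b * ξv b Xp) • Vv a,
    ⟨?_, ?_, rfl⟩, fun y hy => by rw [hy.2.2]⟩
  · rw [hτm]
    intro a
    have h1 : g Xp (Vv a - g.symm (ξv a)) = -2 * ξv a Xp := by
      rw [map_sub, hgs, hXpV]; ring
    have h2 : ∑ c, ∑ b, (Kinv c b * ξv b Xp) * K a c = ξv a Xp := by
      rw [Finset.sum_comm]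
      have : ∀ b, ∑ c, (Kinv c b * ξv b Xp) * K a c = (K * Kinv) a b * ξv b Xp := by
        intro b
        rw [Matrix.mul_apply, Finset.sum_mul]
        apply Finset.sum_congr rfl
        intro c _; ring
      simp only [this, hKK]
      simp [Matrix.one_apply]
    calc g (Xp + (2 : ℝ) • ∑ c, ∑ b, (Kinv c b * ξv b Xp) • Vv c) (Vv a - g.symm (ξv a))
        = g Xp (Vv a - g.symm (ξv a))
          + 2 * ∑ c, ∑ b, (Kinv c b * ξv b Xp) * g (Vv c) (Vv a - g.symm (ξv a)) := by
          simp [map_add, map_smul, map_sum, Finset.sum_apply, LinearMap.sum_apply,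
            Finset.mul_sum, mul_assoc]
      _ = -2 * ξv a Xp + 2 * ∑ c, ∑ b, (Kinv c b * ξv b Xp) * K a c := by
          simp only [h1, hVK]
      _ = 0 := by rw [h2]; ring
  · have : Xp - (Xp + (2 : ℝ) • ∑ a, ∑ b, (Kinv a b * ξv b Xp) • Vv a)
        = -((2 : ℝ) • ∑ a, ∑ b, (Kinv a b * ξv b Xp) • Vv a) := by abel
    rw [this]
    refine neg_mem (Submodule.smul_mem _ _ (Submodule.sum_mem _ fun a _ =>
      Submodule.sum_mem _ fun b _ => Submodule.smul_mem _ _ ?_))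
    exact Submodule.subset_span ⟨a, rfl⟩
end
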